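/- In a parameterised interleaved interpreted system T(n) built from a template agent, for any permutation ζ of the agents {1,…,n}, g →a g' is a global transition if and only if ζ(g) →ζ(a) ζ(g') is a global transition, where ζ acts on global states by permuting local components and on actions by renaming agent indices (and fixing synchronous actions). -/
import Mathlib


/-- A template agent: template states, initial state, synchronous and
asynchronous template actions (the silent action is treated separately),
protocol, deterministic evolution function, and labeling. -/
structure Template (AP : Type) where
  L : Type
  init : L
  SAct : Type
  AAct : Type
  protS : L → SAct → Prop
  protA : L → AAct → Prop
  tS : L → SAct → L
  tA : L → AAct → L
  lab : L → AP → Prop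

/-- Global states of the instance `T(n)`: a template state per agent. -/
def GState {AP : Type} (T : Template AP) (n : ℕ) : Type := Fin n → T.L

/-- Concrete actions of `T(n)`: synchronous actions (shared by all agents),
asynchronous actions indexed by the unique agent performing them, and the
(joint) silent action. -/
inductive CAct {AP : Type} (T : Template AP) (n : ℕ) : Type where
  | sync : T.SAct → CAct T n
  | async : T.AAct → Fin n → CAct T n
  | eps : CAct T n

/-- The global interleaved transition relation of `T(n)`: a synchronous
action is performed by all agents simultaneously, an asynchronous action by
exactly one agent (all others keep their state), and the silent action
leaves the global state unchanged. -/
def GTrans {AP : Type} (T : Template AP) (n : ℕ) :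
    CAct T n → GState T n → GState T n → Prop
  | .sync s, g, g' => ∀ i, T.protS (g i) s ∧ g' i = T.tS (g i) s
  | .async b i, g, g' =>
      T.protA (g i) b ∧ g' i = T.tA (g i) b ∧ ∀ j, j ≠ i → g' j = g j
  | .eps, g, g' => g' = g

/-- The initial global state of `T(n)`. -/
def GInit {AP : Type} (T : Template AP) (n : ℕ) : GState T n := fun _ => T.init

/-- Reachability from the initial state of `T(n)`. -/
def GReach {AP : Type} (T : Template AP) (n : ℕ) (g : GState T n) : Prop :=
  Relation.ReflTransGen (fun x y => ∃ a, GTrans T n a x y) (GInit T n) g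

/-- The action of a permutation `ζ` of the agents on global states:
the local component of `ζ(g)` at agent `ζ(i)` is the local component of `g`
at agent `i`. -/
def permG {AP : Type} {T : Template AP} {n : ℕ} (ζ : Equiv.Perm (Fin n))
    (g : GState T n) : GState T n := fun j => g (ζ.symm j)

/-- The action of a permutation `ζ` on concrete actions: asynchronous action
`a_i` is renamed to `a_{ζ(i)}`; synchronous and silent actions are fixed. -/
def permAct {AP : Type} {T : Template AP} {n : ℕ} (ζ : Equiv.Perm (Fin n)) :
    CAct T n → CAct T n
  | .sync s => .sync s
  | .async b i => .async b (ζ i)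
  | .eps => .eps

/-- In a PIIS `T(n)`, for any permutation `ζ` of the agents, `g →a g'` is a
global transition iff `ζ(g) →ζ(a) ζ(g')` is a global transition. -/
theorem gtrans_perm_iff {AP : Type} (T : Template AP) (n : ℕ)
    (ζ : Equiv.Perm (Fin n)) (a : CAct T n) (g g' : GState T n) :
    GTrans T n a g g' ↔ GTrans T n (permAct ζ a) (permG ζ g) (permG ζ g') := by
  cases a with
  | sync s =>
    simp only [GTrans, permAct, permG]
    constructor
    · intro h j; exact h (ζ.symm j)
    · intro h i; simpa using h (ζ i)
  | async b i =>
    simp only [GTrans, permAct, permG, Equiv.symm_apply_apply]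
    constructor
    · rintro ⟨h1, h2, h3⟩
      refine ⟨h1, h2, fun j hj => h3 _ ?_⟩
      intro hc; exact hj (by rw [← hc, Equiv.apply_symm_apply])
    · rintro ⟨h1, h2, h3⟩
      refine ⟨h1, h2, fun j hj => ?_⟩
      have h4 := h3 (ζ j) (fun hc => hj (ζ.injective hc))
      simpa using h4
  | eps =>
    simp only [GTrans, permAct, permG]
    constructor
    · intro h; rw [h]
    · intro h; funext j
      have : g' (ζ.symm (ζ j)) = g (ζ.symm (ζ j)) := congrFun h (ζ j)
      simpa using this
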